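/- Let R_F be the class of end-token rewards r_f(x,y) = 1{y[-1] = f^AR(x)[-1]} induced by a VC class F. Then VC(R_F) ≤ 6 · T · VC(F). -/

import Mathlib

/-!
The reward `r_f (x, y)` depends on `f` only through its values on the prompts `x ++ q` with
`|q| < T`, the only ones the unrolling can query. So if `R_F` shatters `n` pairs, the `2 ^ n`
reward patterns are already told apart by the traces of `F` on at most `N = n (2 ^ T - 1)`
prompts, and the Sauer–Shelah lemma gives `2 ^ n ≤ ∑_{k ≤ d} C(N, k) ≤ (e n 2 ^ T / d) ^ d`.
For `n = 6 T d + 1` the right-hand side is smaller than `2 ^ n`.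
-/

/-- Autoregressive unrolling of a next-token predictor. -/
def arList (f : List Bool → Bool) (x : List Bool) : ℕ → List Bool
  | 0 => []
  | T + 1 => arList f x T ++ [f (x ++ arList f x T)]

/-- `H` shatters the points `xs`. -/
def Shatters {α : Type*} (H : Set (α → Bool)) {n : ℕ} (xs : Fin n → α) : Prop :=
  ∀ v : Fin n → Bool, ∃ h ∈ H, ∀ i, h (xs i) = v i

/-- The VC dimension of `H` is at most `d : ℕ`. -/
def VCdimLe {α : Type*} (H : Set (α → Bool)) (d : ℕ) : Prop :=
  ∀ n (xs : Fin n → α), Shatters H xs → n ≤ d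

/-- The class of end-token rewards `r_f(x,y) = 1{y[-1] = f^AR(x)[-1]}` induced by `F`. -/
def rewardClassET (F : Set (List Bool → Bool)) (T : ℕ) :
    Set (List Bool × List Bool → Bool) :=
  {g | ∃ f ∈ F, g = fun p => decide (p.2.getLastD false = (arList f p.1 T).getLastD false)}

open Finset

section VCDimension

variable {α : Type*} {H : Set (α → Bool)} {d : ℕ}

lemma Shatters.comp {n m : ℕ} {xs : Fin n → α} (hxs : Shatters H xs) {e : Fin m → Fin n}
    (he : Function.Injective e) : Shatters H (xs ∘ e) := by
  intro v
  obtain ⟨h, hH, hv⟩ := hxs (Function.extend e v fun _ => false)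
  exact ⟨h, hH, fun i => (hv (e i)).trans (he.extend_apply v _ i)⟩

lemma VCdimLe.of_forall_not_shatters (h : ∀ xs : Fin (d + 1) → α, ¬Shatters H xs) :
    VCdimLe H d := by
  intro n xs hxs
  by_contra! hn
  exact h _ (hxs.comp (Fin.castLE_injective hn))

open Classical in
noncomputable def traceFamily (H : Set (α → Bool)) (Z : Finset α) : Finset (Finset Z) :=
  univ.filter fun s => ∃ h ∈ H, ∀ z : Z, z ∈ s ↔ h z = true

lemma mem_traceFamily {Z : Finset α} {s : Finset Z} :
    s ∈ traceFamily H Z ↔ ∃ h ∈ H, ∀ z : Z, z ∈ s ↔ h z = true := by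
  simp [traceFamily]

lemma shatters_of_shatters_traceFamily [DecidableEq α] {Z : Finset α} {s : Finset Z}
    (hs : (traceFamily H Z).Shatters s) : Shatters H fun i => ((s.equivFin.symm i : Z) : α) := by
  let e : Fin #s ↪ Z := s.equivFin.symm.toEmbedding.trans (Function.Embedding.subtype _)
  intro v
  obtain ⟨u, hu, hsu⟩ := hs (t := (univ.filter fun i => v i).map e) fun _ hz => by
    obtain ⟨i, -, rfl⟩ := mem_map.1 hz
    exact (s.equivFin.symm i).2
  obtain ⟨h, hH, hhu⟩ := mem_traceFamily.1 hu
  refine ⟨h, hH, fun i => Bool.eq_iff_iff.2 ?_⟩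
  have hi : e i ∈ s ∩ u ↔ e i ∈ (univ.filter fun i => v i).map e := by rw [hsu]
  rwa [mem_inter, and_iff_right (show e i ∈ s from (s.equivFin.symm i).2), hhu, mem_map' e,
    mem_filter, and_iff_right (mem_univ i)] at hi

lemma vcDim_traceFamily_le [DecidableEq α] (hH : VCdimLe H d) (Z : Finset α) :
    (traceFamily H Z).vcDim ≤ d :=
  Finset.sup_le fun _ hs => hH _ _ (shatters_of_shatters_traceFamily (mem_shatterer.1 hs))

lemma card_traceFamily_le (hH : VCdimLe H d) (Z : Finset α) :
    #(traceFamily H Z) ≤ ∑ k ∈ Iic d, (#Z).choose k := by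
  classical
  calc #(traceFamily H Z) ≤ #(traceFamily H Z).shatterer := card_le_card_shatterer _
    _ ≤ ∑ k ∈ Iic (traceFamily H Z).vcDim, (Fintype.card Z).choose k :=
      card_shatterer_le_sum_vcDim
    _ ≤ ∑ k ∈ Iic d, (#Z).choose k := by
      rw [Fintype.card_coe]
      exact sum_le_sum_of_subset (Iic_subset_Iic.2 (vcDim_traceFamily_le hH Z))

lemma Shatters.two_pow_le_card_traceFamily {β : Type*} {G : Set (β → Bool)} {n : ℕ}
    {ps : Fin n → β} (hG : Shatters G ps) {Ψ : (α → Bool) → β → Bool} (hGH : G ⊆ Ψ '' H)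
    {Z : Finset α}
    (hΨ : ∀ h h' : α → Bool, (∀ z ∈ Z, h z = h' z) → ∀ i, Ψ h (ps i) = Ψ h' (ps i)) :
    2 ^ n ≤ #(traceFamily H Z) := by
  choose g hgG hg using hG
  choose h hH hh using fun v => hGH (hgG v)
  have hrealize : ∀ v i, Ψ (h v) (ps i) = v i := fun v i =>
    (congrFun (hh v) (ps i)).trans (hg v i)
  calc 2 ^ n = #(univ : Finset (Fin n → Bool)) := by simp
    _ ≤ #(traceFamily H Z) := by
      refine card_le_card_of_injOn (fun v => univ.filter fun z : Z => h v z) ?_ ?_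
      · exact fun v _ => mem_traceFamily.2 ⟨h v, hH v, fun z => by simp⟩
      · intro v _ w _ hvw
        funext i
        rw [← hrealize v i, ← hrealize w i]
        refine hΨ _ _ (fun z hz => ?_) i
        have := Finset.ext_iff.1 hvw ⟨z, hz⟩
        simp only [mem_filter, mem_univ, true_and] at this
        exact Bool.eq_iff_iff.2 this

end VCDimension

section Autoregressive

lemma arList_length (f : List Bool → Bool) (x : List Bool) (T : ℕ) :
    (arList f x T).length = T := by
  induction T with
  | zero => rfl
  | succ T ih => simp [arList, ih]

lemma arList_congr {f g : List Bool → Bool} {x : List Bool} {T : ℕ}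
    (h : ∀ q : List Bool, q.length < T → f (x ++ q) = g (x ++ q)) :
    arList f x T = arList g x T := by
  induction T with
  | zero => rfl
  | succ T ih =>
    have hT : arList f x T = arList g x T := ih fun q hq => h q (by omega)
    rw [arList, arList, hT, h _ (by rw [arList_length]; omega)]

def shortLists (T : ℕ) : Finset (List Bool) :=
  (range T).biUnion fun k => univ.image (List.ofFn : (Fin k → Bool) → List Bool)

lemma mem_shortLists {T : ℕ} {q : List Bool} : q ∈ shortLists T ↔ q.length < T := by
  simp only [shortLists, mem_biUnion, mem_range, mem_image, mem_univ, true_and]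
  constructor
  · rintro ⟨k, hk, v, rfl⟩
    simpa using hk
  · exact fun hq => ⟨q.length, hq, q.get, List.ofFn_get q⟩

lemma card_shortLists_lt (T : ℕ) : #(shortLists T) < 2 ^ T :=
  calc #(shortLists T) ≤ ∑ k ∈ range T, 2 ^ k := by
        refine card_biUnion_le.trans (sum_le_sum fun k _ => card_image_le.trans ?_)
        simp
    _ < 2 ^ T := Nat.geomSum_lt le_rfl fun k hk => mem_range.1 hk

def rewardET (f : List Bool → Bool) (T : ℕ) (p : List Bool × List Bool) : Bool :=
  decide (p.2.getLastD false = (arList f p.1 T).getLastD false)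

lemma rewardClassET_eq_image (F : Set (List Bool → Bool)) (T : ℕ) :
    rewardClassET F T = (rewardET · T) '' F :=
  Set.ext fun _ => ⟨fun ⟨f, hf, e⟩ => ⟨f, hf, e.symm⟩, fun ⟨f, hf, e⟩ => ⟨f, hf, e.symm⟩⟩

/-- The prompts on which the `T`-step unrolling from the inputs `xs` can query the predictor. -/
def rewardQueries {n : ℕ} (xs : Fin n → List Bool × List Bool) (T : ℕ) : Finset (List Bool) :=
  (univ ×ˢ shortLists T).image fun p => (xs p.1).1 ++ p.2

lemma card_rewardQueries_le {n : ℕ} (xs : Fin n → List Bool × List Bool) (T : ℕ) :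
    #(rewardQueries xs T) ≤ n * (2 ^ T - 1) := by
  refine card_image_le.trans ?_
  rw [card_product, card_univ, Fintype.card_fin]
  exact Nat.mul_le_mul_left n (Nat.le_sub_one_of_lt (card_shortLists_lt T))

lemma rewardET_eq_of_eqOn_rewardQueries {n : ℕ} {xs : Fin n → List Bool × List Bool} {T : ℕ}
    {f g : List Bool → Bool} (h : ∀ z ∈ rewardQueries xs T, f z = g z) (i : Fin n) :
    rewardET f T (xs i) = rewardET g T (xs i) := by
  rw [rewardET, rewardET, arList_congr fun q hq => h _ (mem_image.2 ⟨(i, q), ?_, rfl⟩)]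
  exact mem_product.2 ⟨mem_univ i, mem_shortLists.2 hq⟩

end Autoregressive

lemma sum_choose_le_exp_mul_div_pow {M d : ℕ} (hd : 0 < d) (hdM : d ≤ M) :
    ∑ k ∈ Iic d, (M.choose k : ℝ) ≤ (Real.exp 1 * M / d) ^ d := by
  set t : ℝ := d / M with ht
  have hM : (0 : ℝ) < M := by exact_mod_cast hd.trans_le hdM
  have ht0 : 0 < t := by positivity
  have ht1 : t ≤ 1 := div_le_one_of_le₀ (by exact_mod_cast hdM) (Nat.cast_nonneg M)
  have key : (∑ k ∈ Iic d, (M.choose k : ℝ)) * t ^ d ≤ Real.exp d :=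
    calc (∑ k ∈ Iic d, (M.choose k : ℝ)) * t ^ d = ∑ k ∈ Iic d, M.choose k * t ^ d := sum_mul ..
      _ ≤ ∑ k ∈ Iic d, M.choose k * t ^ k := sum_le_sum fun k hk =>
          mul_le_mul_of_nonneg_left (pow_le_pow_of_le_one ht0.le ht1 (mem_Iic.1 hk)) (by positivity)
      _ ≤ ∑ k ∈ range (M + 1), M.choose k * t ^ k :=
          sum_le_sum_of_subset_of_nonneg
            (fun k hk => mem_range.2 (Nat.lt_succ_of_le ((mem_Iic.1 hk).trans hdM)))
            fun _ _ _ => by positivity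
      _ = (t + 1) ^ M := by rw [add_pow]; simp [mul_comm]
      _ ≤ Real.exp t ^ M := pow_le_pow_left₀ (by positivity) (Real.add_one_le_exp t) M
      _ = Real.exp d := by rw [← Real.exp_nat_mul, ht, mul_div_cancel₀ _ hM.ne']
  rw [div_pow, mul_pow, Real.exp_one_pow, le_div_iff₀ (by positivity)]
  calc (∑ k ∈ Iic d, (M.choose k : ℝ)) * d ^ d
        = (∑ k ∈ Iic d, (M.choose k : ℝ)) * t ^ d * M ^ d := by rw [ht, div_pow]; field_simp
    _ ≤ Real.exp d * M ^ d := mul_le_mul_of_nonneg_right key (by positivity)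

lemma sum_choose_lt_two_pow (T d : ℕ) :
    ∑ k ∈ Iic d, ((6 * T * d + 1) * (2 ^ T - 1)).choose k < 2 ^ (6 * T * d + 1) := by
  rcases Nat.eq_zero_or_pos T with rfl | hT
  · simp [← Nat.range_succ_eq_Iic, sum_range_succ']
  rcases Nat.eq_zero_or_pos d with rfl | hd
  · simp [← Nat.range_succ_eq_Iic]
  set M := (6 * T * d + 1) * 2 ^ T with hMdef
  have hmono : ∑ k ∈ Iic d, ((6 * T * d + 1) * (2 ^ T - 1)).choose k ≤
      ∑ k ∈ Iic d, M.choose k :=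
    sum_le_sum fun k _ => Nat.choose_le_choose k (Nat.mul_le_mul_left _ (Nat.sub_le _ _))
  have hdM : d ≤ M := le_trans (by nlinarith) (Nat.le_mul_of_pos_right _ (by positivity))
  have hbase : Real.exp 1 * M / d ≤ 2 ^ (6 * T) := by
    have h32 : (21 * T : ℝ) ≤ 32 ^ T := by
      have := one_add_mul_le_pow (a := (31 : ℝ)) (by norm_num) T
      norm_num at this
      linarith
    have h7 : (6 * T * d + 1 : ℝ) ≤ 7 * T * d := by
      have : (1 : ℝ) ≤ T * d := by exact_mod_cast Nat.one_le_iff_ne_zero.2 (by positivity)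
      linarith
    rw [div_le_iff₀ (by positivity)]
    calc Real.exp 1 * M ≤ 3 * (7 * T * d * 2 ^ T) := by
          rw [hMdef]; push_cast
          gcongr
          exact Real.exp_one_lt_three.le
      _ = d * (21 * T) * 2 ^ T := by ring
      _ ≤ d * 32 ^ T * 2 ^ T := by gcongr
      _ = 2 ^ (6 * T) * d := by
          rw [show (32 : ℝ) = 2 ^ 5 by norm_num, ← pow_mul, mul_assoc, ← pow_add]; ring_nf
  have hsum_lt : ((∑ k ∈ Iic d, M.choose k : ℕ) : ℝ) < 2 ^ (6 * T * d + 1) := by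
    push_cast
    calc ∑ k ∈ Iic d, (M.choose k : ℝ) ≤ (Real.exp 1 * M / d) ^ d :=
          sum_choose_le_exp_mul_div_pow hd hdM
      _ ≤ (2 ^ (6 * T)) ^ d := by gcongr
      _ < 2 ^ (6 * T * d + 1) := by rw [← pow_mul]; exact pow_lt_pow_right₀ one_lt_two (by omega)
  exact hmono.trans_lt (by exact_mod_cast hsum_lt)

/-- for the end-token reward class, `VC(R_F) ≤ 6 · T · VC(F)`. -/
theorem vc_rewardET_le_six_T_mul_vc (T d : ℕ) (F : Set (List Bool → Bool))
    (hVC : VCdimLe F d) :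
    VCdimLe (rewardClassET F T) (6 * T * d) := by
  refine VCdimLe.of_forall_not_shatters fun xs hxs => (sum_choose_lt_two_pow T d).not_ge ?_
  calc 2 ^ (6 * T * d + 1) ≤ #(traceFamily F (rewardQueries xs T)) :=
        hxs.two_pow_le_card_traceFamily (rewardClassET_eq_image F T).le
          fun _ _ h => rewardET_eq_of_eqOn_rewardQueries h
    _ ≤ ∑ k ∈ Iic d, (#(rewardQueries xs T)).choose k := card_traceFamily_le hVC _
    _ ≤ ∑ k ∈ Iic d, ((6 * T * d + 1) * (2 ^ T - 1)).choose k :=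
        sum_le_sum fun k _ => Nat.choose_le_choose k (card_rewardQueries_le xs T)
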